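/- In U_q(su(1,1))⊗U_q(su(1,1)), define K₁ = (1 − q^{J₀}⊗q^{−J₀})/(4(1−q)) and K₂ = Δ(C)/2 where C is the Casimir and Δ the coproduct. Then K₃ := [K₁,K₂] equals (1/8)(1+q⁻¹)(J₊⊗J₋ − J₋⊗J₊)(q^{−J₀}⊗q^{−J₀}). -/
import Mathlib


noncomputable section

/-- The `k`-mode q-oscillator Fock space: formal complex linear combinations of
occupation-number basis states `|n₁,…,n_k⟩`. -/
abbrev Fock (k : ℕ) := (Fin k → ℕ) →₀ ℂ

/-- Lowering coefficient `√((1−qᵐ)/(1−q))`. -/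
def cf (q : ℝ) (m : ℕ) : ℂ := (Real.sqrt ((1 - q ^ m) / (1 - q)) : ℝ)

/-- Raising operator in mode `i`: `A⁺|n⟩ = √((1−q^{n+1})/(1−q)) |n+1⟩`. -/
def up (q : ℝ) {k : ℕ} (i : Fin k) : Module.End ℂ (Fock k) :=
  Finsupp.lsum ℂ fun n => cf q (n i + 1) • Finsupp.lsingle (Function.update n i (n i + 1))

/-- Lowering operator in mode `i`: `A⁻|n⟩ = √((1−qⁿ)/(1−q)) |n−1⟩` (kills `|0⟩`). -/
def dn (q : ℝ) {k : ℕ} (i : Fin k) : Module.End ℂ (Fock k) :=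
  Finsupp.lsum ℂ fun n => cf q (n i) • Finsupp.lsingle (Function.update n i (n i - 1))

/-- Diagonal operator acting on `|n⟩` by the scalar `d n`. -/
def diag {k : ℕ} (d : (Fin k → ℕ) → ℂ) : Module.End ℂ (Fock k) :=
  Finsupp.lsum ℂ fun n => d n • Finsupp.lsingle n

/-- `q`-exponential of a diagonal operator: acts on `|n⟩` by `q^{E n}` (real power). -/
def qd (q : ℝ) {k : ℕ} (E : (Fin k → ℕ) → ℝ) : Module.End ℂ (Fock k) :=
  diag fun n => ((q ^ (E n) : ℝ) : ℂ)

/-- Basis state `|n⟩`. -/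
def ket {k : ℕ} (n : Fin k → ℕ) : Fock k := Finsupp.single n 1

@[simp] lemma cf_zero (q : ℝ) : cf q 0 = 0 := by simp [cf]

@[simp] lemma qd_single (q : ℝ) {k : ℕ} (E : (Fin k → ℕ) → ℝ) (n : Fin k → ℕ) (c : ℂ) :
    qd q E (Finsupp.single n c) = ((q ^ E n : ℝ) : ℂ) • Finsupp.single n c := by
  simp [qd, diag, Finsupp.lsum_single]

@[simp] lemma up_single (q : ℝ) {k : ℕ} (i : Fin k) (n : Fin k → ℕ) (c : ℂ) :
    up q i (Finsupp.single n c)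
      = cf q (n i + 1) • Finsupp.single (Function.update n i (n i + 1)) c := by
  simp [up, Finsupp.lsum_single]

@[simp] lemma dn_single (q : ℝ) {k : ℕ} (i : Fin k) (n : Fin k → ℕ) (c : ℂ) :
    dn q i (Finsupp.single n c)
      = cf q (n i) • Finsupp.single (Function.update n i (n i - 1)) c := by
  simp [dn, Finsupp.lsum_single]

lemma end_ext {k : ℕ} {f g : Module.End ℂ (Fock k)}
    (h : ∀ n, f (Finsupp.single n 1) = g (Finsupp.single n 1)) : f = g := by
  apply Finsupp.lhom_ext
  intro a b
  have hb : (Finsupp.single a b : Fock k) = b • Finsupp.single a 1 := by simp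
  rw [hb, map_smul, map_smul, h]

lemma qd_mul_qd (q : ℝ) (hq0 : 0 < q) {k : ℕ} (E F : (Fin k → ℕ) → ℝ) :
    qd q E * qd q F = qd q (fun n => E n + F n) := by
  refine end_ext fun n => ?_
  simp [Module.End.mul_apply, smul_smul, Real.rpow_add hq0, mul_comm]

lemma qd_add_const (q : ℝ) (hq0 : 0 < q) {k : ℕ} (E : (Fin k → ℕ) → ℝ) (c : ℝ) :
    qd q (fun n => E n + c) = ((q ^ c : ℝ) : ℂ) • qd q E := by
  refine end_ext fun n => ?_
  simp [Real.rpow_add hq0, smul_smul, mul_comm]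

lemma qd_mul_up (q : ℝ) {k : ℕ} (E : (Fin k → ℕ) → ℝ) (i : Fin k) :
    qd q E * up q i = up q i * qd q (fun n => E (Function.update n i (n i + 1))) := by
  refine end_ext fun n => ?_
  simp [Module.End.mul_apply, smul_smul, mul_comm]

lemma qd_mul_dn (q : ℝ) {k : ℕ} (E : (Fin k → ℕ) → ℝ) (i : Fin k) :
    qd q E * dn q i = dn q i * qd q (fun n => E (Function.update n i (n i - 1))) := by
  refine end_ext fun n => ?_
  simp [Module.End.mul_apply, smul_smul, mul_comm]

lemma dn_dn_qd_congr (q : ℝ) {k : ℕ} (i : Fin k) {F G : (Fin k → ℕ) → ℝ}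
    (h : ∀ n, 2 ≤ n i → F n = G n) :
    dn q i * dn q i * qd q F = dn q i * dn q i * qd q G := by
  refine end_ext fun n => ?_
  rcases Nat.lt_or_ge (n i) 2 with h2 | h2
  · rcases (by omega : n i = 0 ∨ n i = 1) with hn | hn <;>
      simp only [Module.End.mul_apply, qd_single, map_smul, dn_single, hn,
        Function.update_self, Nat.sub_self, cf_zero, zero_smul, smul_zero, map_zero]
  · simp [Module.End.mul_apply, h n h2]

lemma up_dn_comm (q : ℝ) {k : ℕ} {i j : Fin k} (hij : i ≠ j) :
    up q i * dn q j = dn q j * up q i := by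
  refine end_ext fun n => ?_
  simp [Module.End.mul_apply, Function.update_of_ne hij, Function.update_of_ne hij.symm,
    smul_smul, mul_comm, Function.update_comm hij]

lemma qd_mul_upsq (q : ℝ) {k : ℕ} (E : (Fin k → ℕ) → ℝ) (i : Fin k) :
    qd q E * (up q i * up q i)
      = (up q i * up q i) * qd q (fun n => E (Function.update n i (n i + 2))) := by
  rw [← mul_assoc, qd_mul_up, mul_assoc, qd_mul_up, ← mul_assoc]
  congr 2
  funext n
  congr 1
  simp [Function.update_idem]

lemma qd_mul_dnsq (q : ℝ) {k : ℕ} (E : (Fin k → ℕ) → ℝ) (i : Fin k) :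
    qd q E * (dn q i * dn q i)
      = (dn q i * dn q i) * qd q (fun n => E (Function.update n i (n i - 2))) := by
  rw [← mul_assoc, qd_mul_dn, mul_assoc, qd_mul_dn, ← mul_assoc]
  congr 2
  funext n
  simp only [Function.update_idem, Function.update_self]
  rfl

-- commutation of Q with the four quadratic pieces
lemma QA (q : ℝ) (hq0 : 0 < q) :
    qd q (fun n : Fin 2 → ℕ => ((n 0 : ℝ) - (n 1 : ℝ)) / 2) * (up q 0 * up q 0)
      = ((q : ℝ) : ℂ) •
        ((up q 0 * up q 0) * qd q (fun n : Fin 2 → ℕ => ((n 0 : ℝ) - (n 1 : ℝ)) / 2)) := by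
  rw [qd_mul_upsq]
  have e : (fun n : Fin 2 → ℕ =>
      ((Function.update n 0 (n 0 + 2) 0 : ℝ) - (Function.update n 0 (n 0 + 2) 1 : ℝ)) / 2)
      = fun n : Fin 2 → ℕ => ((n 0 : ℝ) - (n 1 : ℝ)) / 2 + 1 := by
    funext n; simp; ring
  rw [e, qd_add_const q hq0, Real.rpow_one, mul_smul_comm]

lemma QB (q : ℝ) (hq0 : 0 < q) :
    qd q (fun n : Fin 2 → ℕ => ((n 0 : ℝ) - (n 1 : ℝ)) / 2) * (up q 1 * up q 1)
      = ((q⁻¹ : ℝ) : ℂ) •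
        ((up q 1 * up q 1) * qd q (fun n : Fin 2 → ℕ => ((n 0 : ℝ) - (n 1 : ℝ)) / 2)) := by
  rw [qd_mul_upsq]
  have e : (fun n : Fin 2 → ℕ =>
      ((Function.update n 1 (n 1 + 2) 0 : ℝ) - (Function.update n 1 (n 1 + 2) 1 : ℝ)) / 2)
      = fun n : Fin 2 → ℕ => ((n 0 : ℝ) - (n 1 : ℝ)) / 2 + (-1) := by
    funext n; simp; push_cast; ring
  rw [e, qd_add_const q hq0, Real.rpow_neg_one, mul_smul_comm]

lemma QC0 (q : ℝ) (hq0 : 0 < q) :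
    qd q (fun n : Fin 2 → ℕ => ((n 0 : ℝ) - (n 1 : ℝ)) / 2) * (dn q 0 * dn q 0)
      = ((q⁻¹ : ℝ) : ℂ) •
        ((dn q 0 * dn q 0) * qd q (fun n : Fin 2 → ℕ => ((n 0 : ℝ) - (n 1 : ℝ)) / 2)) := by
  rw [qd_mul_dnsq]
  have h : ∀ n : Fin 2 → ℕ, 2 ≤ n 0 →
      ((Function.update n 0 (n 0 - 2) 0 : ℝ) - (Function.update n 0 (n 0 - 2) 1 : ℝ)) / 2
        = ((n 0 : ℝ) - (n 1 : ℝ)) / 2 + (-1) := by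
    intro n hn
    simp [Function.update_of_ne (show (1:Fin 2) ≠ 0 from by decide),
      Function.update_of_ne (show (0:Fin 2) ≠ 1 from by decide)]
    rw [Nat.cast_sub hn]
    push_cast; ring
  rw [dn_dn_qd_congr q 0 h, qd_add_const q hq0, Real.rpow_neg_one, mul_smul_comm]

lemma QC1 (q : ℝ) (hq0 : 0 < q) :
    qd q (fun n : Fin 2 → ℕ => ((n 0 : ℝ) - (n 1 : ℝ)) / 2) * (dn q 1 * dn q 1)
      = ((q : ℝ) : ℂ) •
        ((dn q 1 * dn q 1) * qd q (fun n : Fin 2 → ℕ => ((n 0 : ℝ) - (n 1 : ℝ)) / 2)) := by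
  rw [qd_mul_dnsq]
  have h : ∀ n : Fin 2 → ℕ, 2 ≤ n 1 →
      ((Function.update n 1 (n 1 - 2) 0 : ℝ) - (Function.update n 1 (n 1 - 2) 1 : ℝ)) / 2
        = ((n 0 : ℝ) - (n 1 : ℝ)) / 2 + 1 := by
    intro n hn
    simp [Function.update_of_ne (show (1:Fin 2) ≠ 0 from by decide),
      Function.update_of_ne (show (0:Fin 2) ≠ 1 from by decide)]
    rw [Nat.cast_sub hn]
    push_cast; ring
  rw [dn_dn_qd_congr q 1 h, qd_add_const q hq0, Real.rpow_one, mul_smul_comm]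

lemma qd_comm (q : ℝ) (hq0 : 0 < q) {k : ℕ} (E F : (Fin k → ℕ) → ℝ) :
    qd q E * qd q F = qd q F * qd q E := by
  rw [qd_mul_qd q hq0, qd_mul_qd q hq0]
  congr 1; funext n; ring

lemma pass {Q X Y : Module.End ℂ (Fock 2)} {a b : ℂ}
    (hX : Q * X = a • (X * Q)) (hY : Q * Y = b • (Y * Q)) :
    Q * (X * Y) = (a * b) • ((X * Y) * Q) := by
  rw [← mul_assoc, hX, smul_mul_assoc, mul_assoc, hY, mul_smul_comm, smul_smul, mul_assoc]

lemma pass_smul {Q X : Module.End ℂ (Fock 2)} {a : ℂ} (c : ℂ)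
    (hX : Q * X = a • (X * Q)) :
    Q * (c • X) = a • ((c • X) * Q) := by
  rw [mul_smul_comm, hX, smul_mul_assoc, smul_comm]

lemma updn_sq_comm (q : ℝ) (Z : Module.End ℂ (Fock 2)) :
    (up q 1 * up q 1) * ((dn q 0 * dn q 0) * Z)
      = (dn q 0 * dn q 0) * ((up q 1 * up q 1) * Z) := by
  have h' : ∀ z : Module.End ℂ (Fock 2), up q 1 * (dn q 0 * z) = dn q 0 * (up q 1 * z) := by
    intro z
    rw [← mul_assoc, up_dn_comm q (show (1 : Fin 2) ≠ 0 from by decide), mul_assoc]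
  simp only [mul_assoc, h']

lemma red2 (q : ℝ) (hq0 : 0 < q) (κ : ℂ) :
    ((((κ • (up q 0 * up q 0)) * qd q (fun n : Fin 2 → ℕ => (n 1 : ℝ) + 1/2)) *
        (κ • (dn q 1 * dn q 1))) * qd q (fun n : Fin 2 → ℕ => -((n 0 : ℝ) + (n 1 : ℝ)))) *
      qd q (fun n : Fin 2 → ℕ => ((n 0 : ℝ) - (n 1 : ℝ)) / 2)
    = ((q⁻¹ : ℝ) : ℂ) • (((κ • (up q 0 * up q 0)) * (κ • (dn q 1 * dn q 1))) *
        qd q (fun n : Fin 2 → ℕ => -(((n 0 : ℝ) + 1/2) / 2) - (((n 1 : ℝ) + 1/2) / 2))) := by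
  rw [mul_assoc _ (qd q _) (qd q _), qd_mul_qd q hq0]
  rw [mul_assoc ((κ • (up q 0 * up q 0)) * qd q _) (κ • (dn q 1 * dn q 1)) (qd q _)]
  rw [smul_mul_assoc (κ) (dn q 1 * dn q 1) (qd q _)]
  rw [mul_smul_comm]
  rw [mul_assoc (κ • (up q 0 * up q 0)) (qd q _) _]
  rw [← mul_assoc (qd q (fun n : Fin 2 → ℕ => (n 1 : ℝ) + 1/2)) (dn q 1 * dn q 1) (qd q _)]
  rw [qd_mul_dnsq]
  rw [mul_assoc (dn q 1 * dn q 1) (qd q _) (qd q _), qd_mul_qd q hq0]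
  have h : ∀ n : Fin 2 → ℕ, 2 ≤ n 1 →
      ((Function.update n 1 (n 1 - 2) 1 : ℝ) + 1/2
          + (-((n 0 : ℝ) + (n 1 : ℝ)) + ((n 0 : ℝ) - (n 1 : ℝ)) / 2))
        = (-(((n 0 : ℝ) + 1/2) / 2) - (((n 1 : ℝ) + 1/2) / 2)) + (-1) := by
    intro n hn
    simp only [Function.update_self]
    rw [Nat.cast_sub hn]
    push_cast; ring
  rw [dn_dn_qd_congr q 1 h, qd_add_const q hq0, Real.rpow_neg_one]
  simp only [mul_smul_comm, smul_mul_assoc, smul_smul, mul_assoc]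
  match_scalars
  ring

lemma red3 (q : ℝ) (hq0 : 0 < q) (κ : ℂ) :
    (((κ • (up q 1 * up q 1)) * ((κ • (dn q 0 * dn q 0)) *
          qd q (fun n : Fin 2 → ℕ => (n 1 : ℝ) + 1/2))) *
        qd q (fun n : Fin 2 → ℕ => -((n 0 : ℝ) + (n 1 : ℝ)))) *
      qd q (fun n : Fin 2 → ℕ => ((n 0 : ℝ) - (n 1 : ℝ)) / 2)
    = ((q : ℝ) : ℂ) • (((κ • (dn q 0 * dn q 0)) * (κ • (up q 1 * up q 1))) *
        qd q (fun n : Fin 2 → ℕ => -(((n 0 : ℝ) + 1/2) / 2) - (((n 1 : ℝ) + 1/2) / 2))) := by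
  rw [mul_assoc _ (qd q _) (qd q _), qd_mul_qd q hq0]
  rw [mul_assoc (κ • (up q 1 * up q 1)) _ (qd q _)]
  rw [smul_mul_assoc κ (dn q 0 * dn q 0) (qd q _), smul_mul_assoc]
  rw [smul_mul_assoc κ _ (qd q _)]
  rw [mul_smul_comm κ (up q 1 * up q 1)]
  rw [mul_assoc (dn q 0 * dn q 0)]
  rw [qd_mul_qd q hq0]
  have e : (fun n : Fin 2 → ℕ =>
      ((n 1 : ℝ) + 1/2 + (-((n 0 : ℝ) + (n 1 : ℝ)) + ((n 0 : ℝ) - (n 1 : ℝ)) / 2)))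
      = fun n : Fin 2 → ℕ => (-(((n 0 : ℝ) + 1/2) / 2) - (((n 1 : ℝ) + 1/2) / 2)) + 1 := by
    funext n; ring
  rw [e, qd_add_const q hq0, Real.rpow_one]
  rw [mul_smul_comm ((q : ℝ) : ℂ) (dn q 0 * dn q 0)]
  rw [mul_smul_comm ((q : ℝ) : ℂ) (up q 1 * up q 1)]
  rw [updn_sq_comm q]
  simp only [mul_smul_comm, smul_mul_assoc, smul_smul, mul_assoc]
  match_scalars
  ring

lemma end_sub_mul (A B C : Module.End ℂ (Fock 2)) : (A - B) * C = A * C - B * C :=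
  LinearMap.ext fun v => by
    simp [Module.End.mul_apply, LinearMap.sub_apply]

lemma end_mul_sub (A B C : Module.End ℂ (Fock 2)) : A * (B - C) = A * B - A * C :=
  LinearMap.ext fun v => by
    simp [Module.End.mul_apply, LinearMap.sub_apply]

lemma stepA (G Q : Module.End ℂ (Fock 2)) (c1 c2 : ℂ) :
    (c1 • ((1 : Module.End ℂ (Fock 2)) - Q)) * (c2 • G) - (c2 • G) * (c1 • (1 - Q))
      = (c1 * c2) • (G * Q - Q * G) := by
  simp only [smul_mul_assoc, mul_smul_comm, end_sub_mul, end_mul_sub, one_mul, mul_one,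
    smul_sub, smul_smul]
  module

lemma stepB (PM Q Dp Dm : Module.End ℂ (Fock 2)) (r1 r2 : ℂ)
    (hp : Q * Dp = Dp * Q) (hm : Q * Dm = Dm * Q) :
    (PM * Dm - r1 • (Dp + Dm) + r2 • (1 : Module.End ℂ (Fock 2))) * Q
        - Q * (PM * Dm - r1 • (Dp + Dm) + r2 • 1)
      = (PM * Dm) * Q - Q * (PM * Dm) := by
  simp only [add_mul, mul_add, end_sub_mul, end_mul_sub, smul_mul_assoc, mul_smul_comm,
    one_mul, mul_one, smul_add]
  rw [hp, hm]
  abel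

lemma stepC (T1 T2 T3 T4 Dm Q : Module.End ℂ (Fock 2)) (a1 a2 a3 a4 : ℂ)
    (h1 : Q * (T1 * Dm) = a1 • ((T1 * Dm) * Q))
    (h2 : Q * (T2 * Dm) = a2 • ((T2 * Dm) * Q))
    (h3 : Q * (T3 * Dm) = a3 • ((T3 * Dm) * Q))
    (h4 : Q * (T4 * Dm) = a4 • ((T4 * Dm) * Q)) :
    ((T1 + T2 + T3 + T4) * Dm) * Q - Q * ((T1 + T2 + T3 + T4) * Dm)
      = (1 - a1) • ((T1 * Dm) * Q) + (1 - a2) • ((T2 * Dm) * Q)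
          + (1 - a3) • ((T3 * Dm) * Q) + (1 - a4) • ((T4 * Dm) * Q) := by
  simp only [add_mul, mul_add]
  rw [h1, h2, h3, h4]
  module

lemma main (q : ℝ) (hq0 : 0 < q) (hq1 : q < 1) (κ : ℂ) :
    let DJp : Module.End ℂ (Fock 2) :=
      (κ • (up q 0) ^ 2) * qd q (fun n => (n 1 : ℝ) + 1/2) + κ • (up q 1) ^ 2
    let DJm : Module.End ℂ (Fock 2) :=
      (κ • (dn q 0) ^ 2) * qd q (fun n => (n 1 : ℝ) + 1/2) + κ • (dn q 1) ^ 2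
    let DC : Module.End ℂ (Fock 2) :=
      DJp * DJm * qd q (fun n => -((n 0 : ℝ) + (n 1 : ℝ)))
        - ((q / (q^2 - 1)^2 : ℝ) : ℂ) •
            (qd q (fun n => (n 0 : ℝ) + (n 1 : ℝ)) + qd q (fun n => -((n 0 : ℝ) + (n 1 : ℝ))))
        + (((q^2 + 1) / (q^2 - 1)^2 : ℝ) : ℂ) • 1
    let K1 : Module.End ℂ (Fock 2) :=
      (((4 * (1 - q))⁻¹ : ℝ) : ℂ) • ((1 : Module.End ℂ (Fock 2))
        - qd q (fun n => ((n 0 : ℝ) - (n 1 : ℝ)) / 2))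
    let K2 : Module.End ℂ (Fock 2) := (2 : ℂ)⁻¹ • DC
    K1 * K2 - K2 * K1 =
      ((8⁻¹ * (1 + q⁻¹) : ℝ) : ℂ) •
        (((κ • (up q 0) ^ 2) * (κ • (dn q 1) ^ 2) - (κ • (dn q 0) ^ 2) * (κ • (up q 1) ^ 2)) *
          qd q (fun n => -(((n 0 : ℝ) + 1/2) / 2) - (((n 1 : ℝ) + 1/2) / 2))) := by
  intro DJp DJm DC K1 K2
  have hqC : ((q : ℝ) : ℂ) ≠ 0 := by
    exact_mod_cast hq0.ne'
  have h1q : ((1 - q : ℝ) : ℂ) ≠ 0 := by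
    exact_mod_cast (by linarith : (1 - q : ℝ) ≠ 0)
  unfold K1 K2 DC DJp DJm
  simp only [pow_two]
  -- abbreviations for readability are avoided; work with explicit terms
  have hQW : qd q (fun n : Fin 2 → ℕ => ((n 0 : ℝ) - (n 1 : ℝ)) / 2) *
      qd q (fun n : Fin 2 → ℕ => (n 1 : ℝ) + 1/2)
      = (1 : ℂ) • (qd q (fun n : Fin 2 → ℕ => (n 1 : ℝ) + 1/2) *
        qd q (fun n : Fin 2 → ℕ => ((n 0 : ℝ) - (n 1 : ℝ)) / 2)) := by
    rw [one_smul]; exact qd_comm q hq0 _ _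
  have hQDm : qd q (fun n : Fin 2 → ℕ => ((n 0 : ℝ) - (n 1 : ℝ)) / 2) *
      qd q (fun n : Fin 2 → ℕ => -((n 0 : ℝ) + (n 1 : ℝ)))
      = (1 : ℂ) • (qd q (fun n : Fin 2 → ℕ => -((n 0 : ℝ) + (n 1 : ℝ))) *
        qd q (fun n : Fin 2 → ℕ => ((n 0 : ℝ) - (n 1 : ℝ)) / 2)) := by
    rw [one_smul]; exact qd_comm q hq0 _ _
  rw [stepA]
  rw [stepB _ _ _ _ _ _ (qd_comm q hq0 _ _) (qd_comm q hq0 _ _)]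
  rw [show ((κ • (up q 0 * up q 0)) * qd q (fun n : Fin 2 → ℕ => (n 1 : ℝ) + 1/2)
        + κ • (up q 1 * up q 1)) *
      ((κ • (dn q 0 * dn q 0)) * qd q (fun n : Fin 2 → ℕ => (n 1 : ℝ) + 1/2)
        + κ • (dn q 1 * dn q 1))
      = (((κ • (up q 0 * up q 0)) * qd q (fun n : Fin 2 → ℕ => (n 1 : ℝ) + 1/2)) *
          ((κ • (dn q 0 * dn q 0)) * qd q (fun n : Fin 2 → ℕ => (n 1 : ℝ) + 1/2)))
        + (((κ • (up q 0 * up q 0)) * qd q (fun n : Fin 2 → ℕ => (n 1 : ℝ) + 1/2)) *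
          (κ • (dn q 1 * dn q 1)))
        + ((κ • (up q 1 * up q 1)) *
          ((κ • (dn q 0 * dn q 0)) * qd q (fun n : Fin 2 → ℕ => (n 1 : ℝ) + 1/2)))
        + ((κ • (up q 1 * up q 1)) * (κ • (dn q 1 * dn q 1)))
      from by rw [mul_add, add_mul, add_mul]; abel]
  rw [stepC _ _ _ _ _ _ _ _ _ _
    (pass (pass (pass_smul κ (QA q hq0)) hQW) (pass (pass_smul κ (QC0 q hq0)) hQW) |>.trans
      (by rw [mul_assoc]) |> fun h => pass h hQDm)
    (pass (pass (pass (pass_smul κ (QA q hq0)) hQW) (pass_smul κ (QC1 q hq0))) hQDm)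
    (pass (pass (pass_smul κ (QB q hq0)) (pass (pass_smul κ (QC0 q hq0)) hQW)) hQDm)
    (pass (pass (pass_smul κ (QB q hq0)) (pass_smul κ (QC1 q hq0))) hQDm)]
  rw [end_sub_mul, red2 q hq0 κ, red3 q hq0 κ]
  have h1q' : (1 : ℂ) - (q : ℝ) ≠ 0 := by
    push_cast at h1q; exact h1q
  match_scalars <;> (push_cast; field_simp; try ring)

/-- with `K₁ = (1 − q^{J₀}⊗q^{−J₀})/(4(1−q))` and `K₂ = Δ(C)/2` in the
tensor product of two metaplectic representations, `K₃ := [K₁,K₂]` equals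
`(1/8)(1+q⁻¹)(J₊⊗J₋ − J₋⊗J₊)(q^{−J₀}⊗q^{−J₀})`. -/
theorem stmt14 (q : ℝ) (hq0 : 0 < q) (hq1 : q < 1) :
    let κ : ℂ := (((q ^ ((1:ℝ)/2) + q ^ (-(1:ℝ)/2))⁻¹ : ℝ) : ℂ)
    let DJp : Module.End ℂ (Fock 2) :=
      (κ • (up q 0) ^ 2) * qd q (fun n => (n 1 : ℝ) + 1/2) + κ • (up q 1) ^ 2
    let DJm : Module.End ℂ (Fock 2) :=
      (κ • (dn q 0) ^ 2) * qd q (fun n => (n 1 : ℝ) + 1/2) + κ • (dn q 1) ^ 2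
    -- Δ(C), with q^{−2Δ(J₀)+1} acting by q^{−(n₁+n₂)} and q^{2Δ(J₀)−1} by q^{n₁+n₂}
    let DC : Module.End ℂ (Fock 2) :=
      DJp * DJm * qd q (fun n => -((n 0 : ℝ) + (n 1 : ℝ)))
        - ((q / (q^2 - 1)^2 : ℝ) : ℂ) •
            (qd q (fun n => (n 0 : ℝ) + (n 1 : ℝ)) + qd q (fun n => -((n 0 : ℝ) + (n 1 : ℝ))))
        + (((q^2 + 1) / (q^2 - 1)^2 : ℝ) : ℂ) • 1
    let K1 : Module.End ℂ (Fock 2) :=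
      (((4 * (1 - q))⁻¹ : ℝ) : ℂ) • ((1 : Module.End ℂ (Fock 2))
        - qd q (fun n => ((n 0 : ℝ) - (n 1 : ℝ)) / 2))
    let K2 : Module.End ℂ (Fock 2) := (2 : ℂ)⁻¹ • DC
    K1 * K2 - K2 * K1 =
      ((8⁻¹ * (1 + q⁻¹) : ℝ) : ℂ) •
        (((κ • (up q 0) ^ 2) * (κ • (dn q 1) ^ 2) - (κ • (dn q 0) ^ 2) * (κ • (up q 1) ^ 2)) *
          qd q (fun n => -(((n 0 : ℝ) + 1/2) / 2) - (((n 1 : ℝ) + 1/2) / 2))) := by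
  exact main q hq0 hq1 _
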